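/- Let ι be a finite type, E a real normed vector space, and for each p ∈ ι let g_p : E → ℝ be twice continuously differentiable (ContDiff ℝ 2). Define C : (ι → E) → ℝ by C(φ) = ∑_p g_p(φ(p)). Then for all φ, all p ≠ q in ι, and all directions u, v ∈ E, the second derivative of C at φ in the pair of directions (Pi.single p u, Pi.single q v) vanishes: fderiv ℝ (fun ψ => fderiv ℝ C ψ (Pi.single p u)) φ (Pi.single q v) = 0. -/

import Mathlib

/-!
Only the `p`-th summand of `C(χ) = ∑ r, g r (χ r)` sees the `p`-th coordinate, so the directional
derivative of `C` along `Pi.single p u` is `ψ ↦ Dg_p(ψ p) u`. This depends on `ψ` only through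
`ψ p`, so its derivative along `Pi.single q v` is evaluated at `(Pi.single q v) p = 0`.
-/

section

variable {𝕜 : Type*} [NontriviallyNormedField 𝕜] {ι : Type*} [Fintype ι]
  {E : Type*} [NormedAddCommGroup E] [NormedSpace 𝕜 E]
  {F : Type*} [NormedAddCommGroup F] [NormedSpace 𝕜 F]

theorem fderiv_comp_eval_apply {f : E → F} {φ : ι → E} {p : ι}
    (hf : DifferentiableAt 𝕜 f (φ p)) (w : ι → E) :
    fderiv 𝕜 (fun ψ : ι → E => f (ψ p)) φ w = fderiv 𝕜 f (φ p) (w p) := by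
  rw [fderiv_fun_comp φ hf (differentiableAt_apply p φ), (hasFDerivAt_apply p φ).fderiv]
  rfl

theorem fderiv_sum_comp_eval_apply {g : ι → E → F} {φ : ι → E}
    (hg : ∀ r, DifferentiableAt 𝕜 (g r) (φ r)) (w : ι → E) :
    fderiv 𝕜 (fun χ : ι → E => ∑ r, g r (χ r)) φ w = ∑ r, fderiv 𝕜 (g r) (φ r) (w r) := by
  have hdiff (r : ι) : DifferentiableAt 𝕜 (fun χ : ι → E => g r (χ r)) φ :=
    (hg r).comp φ (differentiableAt_apply r φ)
  rw [fderiv_fun_sum fun r _ => hdiff r, _root_.sum_apply]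
  exact Finset.sum_congr rfl fun r _ => fderiv_comp_eval_apply (hg r) w

theorem fderiv_sum_comp_eval_single [DecidableEq ι] {g : ι → E → F} {φ : ι → E}
    (hg : ∀ r, DifferentiableAt 𝕜 (g r) (φ r)) (p : ι) (u : E) :
    fderiv 𝕜 (fun χ : ι → E => ∑ r, g r (χ r)) φ (Pi.single p u) = fderiv 𝕜 (g p) (φ p) u := by
  rw [fderiv_sum_comp_eval_apply hg, Finset.sum_eq_single_of_mem p (Finset.mem_univ p)]
  · rw [Pi.single_eq_same]
  · intro r _ hrp
    rw [Pi.single_eq_of_ne hrp, map_zero]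

end

theorem hessian_offdiagonal_block_zero
    {ι : Type*} [Fintype ι] [DecidableEq ι]
    {E : Type*} [NormedAddCommGroup E] [NormedSpace ℝ E]
    (g : ι → E → ℝ) (hg : ∀ p, ContDiff ℝ 2 (g p))
    (φ : ι → E) (p q : ι) (hpq : p ≠ q) (u v : E) :
    fderiv ℝ (fun ψ : ι → E =>
        fderiv ℝ (fun χ : ι → E => ∑ r, g r (χ r)) ψ (Pi.single p u))
      φ (Pi.single q v) = 0 := by
  have hg_diff (r : ι) : Differentiable ℝ (g r) := (hg r).differentiable two_ne_zero
  have hdir : (fun ψ : ι → E => fderiv ℝ (fun χ : ι → E => ∑ r, g r (χ r)) ψ (Pi.single p u))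
      = fun ψ => fderiv ℝ (g p) (ψ p) u :=
    funext fun ψ => fderiv_sum_comp_eval_single (fun r => hg_diff r (ψ r)) p u
  have hdir_diff : Differentiable ℝ (fun x : E => fderiv ℝ (g p) x u) :=
    (((hg p).fderiv_right le_rfl).differentiable one_ne_zero).clm_apply
      (differentiable_const u)
  rw [hdir, fderiv_comp_eval_apply (hdir_diff (φ p)), Pi.single_eq_of_ne hpq, map_zero]
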